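/- (Zero-rate concurrent detection achievability, M hypotheses.) With the typicality-based scheme where the sensor announces which hypothesis m (if any) makes x^n ∈ T_μ(P_X^{(m)}), Detector 1 declares m̂₁ = m iff additionally y₁^n ∈ T_{μ'}(P_{Y₁}^{(m)}) (else declares 1), and Detector 2 declares m̂₂ = m iff additionally y₂^n ∈ T_{μ''}(P_{Y₂}^{(m)}) (else declares 2), the type-II error at Detector 1 satisfies β₁ ≤ Σ_{m≠1} exp[-n(min{D(Q_{XY₁}||P^{(1)}_{XY₁}) : |Q_X - P_X^{(m)}| ≤ μ, |Q_{Y₁} - P_{Y₁}^{(m)}| ≤ μ'} - o(1))], yielding in the limit μ,μ',μ''→0 the exponent θ₁ = min_{m≠1} min{D(Q_{XY₁}||P^{(1)}_{XY₁}) : Q_X = P_X^{(m)}, Q_{Y₁} = P_{Y₁}^{(m)}}. -/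

import Mathlib

open Finset Real Filter
open scoped Classical BigOperators

noncomputable section

/-- `p` is a probability mass function on the finite type `α`. -/
def IsPMF {α : Type*} [Fintype α] (p : α → ℝ) : Prop :=
  (∀ a, 0 ≤ p a) ∧ ∑ a, p a = 1

/-- Kullback-Leibler divergence between two pmfs on a finite type. -/
def klD {α : Type*} [Fintype α] (p q : α → ℝ) : ℝ :=
  ∑ a, p a * Real.log (p a / q a)

/-- Distribution (pushforward) of the random variable `f` under pmf `μ`. -/
def pdist {Ω α : Type*} [Fintype Ω] (μ : Ω → ℝ) (f : Ω → α) : α → ℝ :=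
  fun a => ∑ ω, if f ω = a then μ ω else 0

/-- Shannon entropy (nats) of the random variable `f` under `μ`. -/
def entOf {Ω α : Type*} [Fintype Ω] [Fintype α] (μ : Ω → ℝ) (f : Ω → α) : ℝ :=
  -∑ a, pdist μ f a * Real.log (pdist μ f a)

/-- Mutual information `I(f; g)` under `μ`. -/
def miOf {Ω α β : Type*} [Fintype Ω] [Fintype α] [Fintype β]
    (μ : Ω → ℝ) (f : Ω → α) (g : Ω → β) : ℝ :=
  entOf μ f + entOf μ g - entOf μ (fun ω => (f ω, g ω))

/-- Conditional mutual information `I(f; g | h)` under `μ`. -/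
def cmiOf {Ω α β γ : Type*} [Fintype Ω] [Fintype α] [Fintype β] [Fintype γ]
    (μ : Ω → ℝ) (f : Ω → α) (g : Ω → β) (h : Ω → γ) : ℝ :=
  entOf μ (fun ω => (f ω, h ω)) + entOf μ (fun ω => (g ω, h ω))
    - entOf μ (fun ω => (f ω, g ω, h ω)) - entOf μ h

/-- Empirical distribution of a length-`n` sequence. -/
def emp {α : Type*} [Fintype α] {n : ℕ} (z : Fin n → α) : α → ℝ :=
  fun a => ((Finset.univ.filter fun t => z t = a).card : ℝ) / n

/-- `δ`-typicality w.r.t. a pmf. -/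
def Typ {α : Type*} [Fintype α] {n : ℕ} (δ : ℝ) (p : α → ℝ) (z : Fin n → α) : Prop :=
  ∀ a, |emp z a - p a| ≤ δ

section Model

variable {𝒳 𝒴₁ : Type*} [Fintype 𝒳] [Fintype 𝒴₁]

/-- X-marginal of a pmf on `𝒳 × 𝒴₁`. -/
def mX (p : 𝒳 × 𝒴₁ → ℝ) : 𝒳 → ℝ := fun x => ∑ y1, p (x, y1)

/-- Y₁-marginal of a pmf on `𝒳 × 𝒴₁`. -/
def mY1 (p : 𝒳 × 𝒴₁ → ℝ) : 𝒴₁ → ℝ := fun y1 => ∑ x, p (x, y1)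

/-- Type-II error of Detector 1 in the typicality scheme: probability, under
hypothesis `1` (index `0`), of the union over `m ≠ 1` of the events
`{xⁿ ∈ T_μ(P_X^{(m)}), y₁ⁿ ∈ T_{μ'}(P_{Y₁}^{(m)})}`. -/
def β1 {Mh : ℕ} (P : Fin Mh → 𝒳 × 𝒴₁ → ℝ) (h1 : Fin Mh) (n : ℕ) (μ μ' : ℝ) : ℝ :=
  ∑ x : Fin n → 𝒳, ∑ y1 : Fin n → 𝒴₁,
    if ∃ m, m ≠ h1 ∧ Typ μ (mX (P m)) x ∧ Typ μ' (mY1 (P m)) y1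
      then ∏ t, P h1 (x t, y1 t) else 0

end Model

/-! Method of types. The i.i.d. probability of a sequence of type `Q` is
`exp(-n D(Q‖P⁽¹⁾)) Qⁿ(z) ≤ exp(-n D(Q‖P⁽¹⁾))`, there are at most `(n+1)^|𝒳 × 𝒴₁|` types, and
the error event for hypothesis `m` only contains sequences whose type has marginals within
`μ, μ'` of those of `P⁽ᵐ⁾`; a union bound over `m ≠ 1` gives the first claim with
`o(n) = |𝒳 × 𝒴₁| log(n+1) / n`. For the exponent, the relaxed minima converge to the exact ones as
the slack vanishes, because the simplex is compact and `D(·‖P⁽¹⁾)` is continuous. Finally, for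
large `n` some pair of sequences is typical for a hypothesis `m ≠ 1`, so `β₁ ≥ cⁿ > 0`, which
keeps the normalized logarithm finite. -/

open scoped Topology

section Types

variable {α : Type*} [Fintype α] {n : ℕ}

lemma isPMF_emp (hn : 0 < n) (z : Fin n → α) : IsPMF (emp z) := by
  refine ⟨fun a => by unfold emp; positivity, ?_⟩
  simp only [emp]
  rw [← sum_div, ← Nat.cast_sum, ← card_eq_sum_card_fiberwise fun t _ => mem_univ (z t)]
  simp [hn.ne']

lemma prod_comp_eq_prod_pow_card (z : Fin n → α) (f : α → ℝ) :
    ∏ t, f (z t) = ∏ a, f a ^ #{t | z t = a} := by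
  simp_rw [← prod_fiberwise' univ z f, prod_const]

lemma prod_eq_exp_neg_mul_klD_mul_prod_emp {p : α → ℝ} (hp : ∀ a, 0 < p a) (z : Fin n → α) :
    ∏ t, p (z t) = exp (-n * klD (emp z) p) * ∏ t, emp z (z t) := by
  rw [prod_comp_eq_prod_pow_card z p, prod_comp_eq_prod_pow_card z (emp z), klD, mul_sum, exp_sum,
    ← prod_mul_distrib]
  refine prod_congr rfl fun a _ => ?_
  have hemp : emp z a = #{t | z t = a} / n := rfl
  rcases Nat.eq_zero_or_pos #{t | z t = a} with hk | hk
  · simp [hemp, hk]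
  have hn : 0 < n := (hk.trans_le (card_le_univ _)).trans_eq (Fintype.card_fin n)
  have hq : 0 < emp z a := by rw [hemp]; positivity
  have hexp : -n * (emp z a * log (emp z a / p a)) = #{t | z t = a} * log (p a / emp z a) := by
    rw [log_div hq.ne' (hp a).ne', log_div (hp a).ne' hq.ne', hemp]
    field_simp
    ring
  rw [hexp, exp_nat_mul, exp_log (div_pos (hp a) hq), ← mul_pow, div_mul_cancel₀ _ hq.ne']

lemma sum_prod_le_exp_neg_mul_klD (hn : 0 < n) {p : α → ℝ} (hp : ∀ a, 0 < p a)
    {s : Finset (Fin n → α)} {Q : α → ℝ} (hs : ∀ z ∈ s, emp z = Q) :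
    ∑ z ∈ s, ∏ t, p (z t) ≤ exp (-n * klD Q p) := by
  rcases s.eq_empty_or_nonempty with rfl | ⟨z₀, hz₀⟩
  · simp [(exp_pos _).le]
  have hQ : IsPMF Q := by rw [← hs z₀ hz₀]; exact isPMF_emp hn z₀
  have hQn : ∑ z ∈ s, ∏ t, Q (z t) ≤ 1 :=
    calc ∑ z ∈ s, ∏ t, Q (z t) ≤ ∑ z : Fin n → α, ∏ t, Q (z t) :=
          sum_le_univ_sum_of_nonneg fun z => prod_nonneg fun t _ => hQ.1 _
      _ = 1 := by rw [← Fintype.sum_pow, hQ.2, one_pow]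
  calc ∑ z ∈ s, ∏ t, p (z t) = exp (-n * klD Q p) * ∑ z ∈ s, ∏ t, Q (z t) := by
        rw [mul_sum]
        refine sum_congr rfl fun z hz => ?_
        rw [prod_eq_exp_neg_mul_klD_mul_prod_emp hp, hs z hz]
    _ ≤ exp (-n * klD Q p) := mul_le_of_le_one_right (exp_pos _).le hQn

lemma card_image_emp_le (s : Finset (Fin n → α)) : #(s.image emp) ≤ (n + 1) ^ Fintype.card α := by
  have hsub : s.image emp ⊆ (univ : Finset (α → Fin (n + 1))).image fun k a => (k a : ℝ) / n := by
    intro Q hQ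
    obtain ⟨z, -, rfl⟩ := mem_image.1 hQ
    refine mem_image.2 ⟨fun a => ⟨#{t | z t = a}, Nat.lt_succ_of_le ?_⟩, mem_univ _, rfl⟩
    exact (card_le_univ _).trans_eq (Fintype.card_fin n)
  calc #(s.image emp) ≤ #((univ : Finset (α → Fin (n + 1))).image fun k a => (k a : ℝ) / n) :=
        card_le_card hsub
    _ ≤ (n + 1) ^ Fintype.card α := card_image_le.trans_eq (by simp)

theorem sum_prod_le_of_le_klD_emp (hn : 0 < n) {p : α → ℝ} (hp : ∀ a, 0 < p a)
    {s : Finset (Fin n → α)} {d : ℝ} (hd : ∀ z ∈ s, d ≤ klD (emp z) p) :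
    ∑ z ∈ s, ∏ t, p (z t) ≤ (n + 1) ^ Fintype.card α * exp (-n * d) := by
  calc ∑ z ∈ s, ∏ t, p (z t) = ∑ Q ∈ s.image emp, ∑ z ∈ s with emp z = Q, ∏ t, p (z t) :=
        (sum_fiberwise_of_maps_to (fun z hz => mem_image_of_mem _ hz) _).symm
    _ ≤ ∑ _Q ∈ s.image emp, exp (-n * d) := by
        refine sum_le_sum fun Q hQ => ?_
        obtain ⟨z, hz, rfl⟩ := mem_image.1 hQ
        refine (sum_prod_le_exp_neg_mul_klD hn hp fun z' hz' => (mem_filter.1 hz').2).trans ?_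
        exact exp_le_exp.2 (mul_le_mul_of_nonpos_left (hd z hz) (neg_nonpos.2 n.cast_nonneg))
    _ ≤ (n + 1) ^ Fintype.card α * exp (-n * d) := by
        rw [sum_const, nsmul_eq_mul]
        gcongr
        exact_mod_cast card_image_emp_le s

lemma exists_card_filter_eq (k : α → ℕ) (hk : ∑ a, k a = n) :
    ∃ z : Fin n → α, ∀ a, #{t | z t = a} = k a := by
  obtain ⟨e⟩ : Nonempty ((Σ a, Fin (k a)) ≃ Fin n) :=
    Fintype.card_eq.1 (by simp [Fintype.card_sigma, hk])
  refine ⟨fun t => (e.symm t).1, fun a => ?_⟩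
  calc #{t | (e.symm t).1 = a} = #{s : Σ a, Fin (k a) | s.1 = a} :=
        card_bij (fun t _ => e.symm t) (by simp) (fun _ _ _ _ h => e.symm.injective h)
          fun s hs => ⟨e s, by simpa using hs, by simp⟩
    _ = k a := by
        rw [card_filter, ← univ_sigma_univ, sum_sigma]
        simp [apply_ite Finset.card]

/-- Round every `w a` down except at one point `a₀`, which takes the remainder: rounding loses
less than `1` per point, so `a₀` is off by at most `|α|`. -/
lemma exists_sum_eq_abs_sub_le {w : α → ℝ} (hw : ∀ a, 0 ≤ w a) (hsum : ∑ a, w a = n) :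
    ∃ k : α → ℕ, ∑ a, k a = n ∧ ∀ a, |(k a : ℝ) - w a| ≤ Fintype.card α := by
  rcases isEmpty_or_nonempty α with hα | ⟨⟨a₀⟩⟩
  · have : (n : ℝ) = 0 := by simpa using hsum.symm
    exact ⟨0, by simp; exact_mod_cast this.symm, isEmptyElim⟩
  set s := ∑ a ∈ univ.erase a₀, ⌊w a⌋₊
  have hfloor : ∀ a, 0 ≤ w a - ⌊w a⌋₊ ∧ w a - ⌊w a⌋₊ ≤ 1 := fun a =>
    ⟨sub_nonneg.2 (Nat.floor_le (hw a)), by linarith [Nat.lt_floor_add_one (w a)]⟩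
  have hrest : ∑ a ∈ univ.erase a₀, w a = s + ∑ a ∈ univ.erase a₀, (w a - ⌊w a⌋₊) := by
    simp [s]
  have hloss : ∑ a ∈ univ.erase a₀, (w a - ⌊w a⌋₊) ≤ Fintype.card α :=
    calc ∑ a ∈ univ.erase a₀, (w a - ⌊w a⌋₊) ≤ ∑ _a ∈ univ.erase a₀, (1 : ℝ) :=
          sum_le_sum fun a _ => (hfloor a).2
      _ ≤ Fintype.card α := by simp
  have hw₀ : w a₀ + ∑ a ∈ univ.erase a₀, w a = n := by rw [add_sum_erase _ _ (mem_univ a₀), hsum]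
  have hloss₀ : 0 ≤ ∑ a ∈ univ.erase a₀, (w a - ⌊w a⌋₊) := sum_nonneg fun a _ => (hfloor a).1
  have hs : s ≤ n := by exact_mod_cast (by linarith [hw a₀] : (s : ℝ) ≤ n)
  refine ⟨Function.update (fun a => ⌊w a⌋₊) a₀ (n - s), ?_, fun a => ?_⟩
  · rw [sum_update_of_mem (mem_univ a₀), ← erase_eq, Nat.sub_add_cancel hs]
  rcases eq_or_ne a a₀ with rfl | ha
  · rw [Function.update_self, Nat.cast_sub hs, abs_le]
    constructor <;> linarith
  · rw [Function.update_of_ne ha, abs_le]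
    have : (1 : ℝ) ≤ Fintype.card α := by exact_mod_cast Fintype.card_pos_iff.2 ⟨a₀⟩
    constructor <;> linarith [hfloor a]

lemma exists_abs_emp_sub_le {p : α → ℝ} (hp : IsPMF p) (hn : 0 < n) :
    ∃ z : Fin n → α, ∀ a, |emp z a - p a| ≤ Fintype.card α / n := by
  have hn' : (0 : ℝ) < n := by exact_mod_cast hn
  obtain ⟨k, hk, hkw⟩ := exists_sum_eq_abs_sub_le (w := fun a => n * p a)
    (fun a => mul_nonneg hn'.le (hp.1 a)) (by rw [← mul_sum, hp.2, mul_one])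
  obtain ⟨z, hz⟩ := exists_card_filter_eq k hk
  refine ⟨z, fun a => ?_⟩
  have : emp z a - p a = (k a - n * p a) / n := by
    rw [emp, hz]
    field_simp
  rw [this, abs_div, abs_of_pos hn']
  exact div_le_div_of_nonneg_right (hkw a) hn'.le

lemma eventually_exists_typ {p : α → ℝ} (hp : IsPMF p) {δ : ℝ} (hδ : 0 < δ) :
    ∀ᶠ n in atTop, ∃ z : Fin n → α, Typ δ p z := by
  filter_upwards
    [(tendsto_const_div_atTop_nhds_zero_nat (Fintype.card α : ℝ)).eventually_le_const hδ,
    eventually_gt_atTop 0] with n hcard hn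
  obtain ⟨z, hz⟩ := exists_abs_emp_sub_le hp hn
  exact ⟨z, fun a => (hz a).trans hcard⟩

end Types

section KL

variable {α : Type*} [Fintype α]

lemma sum_sub_sum_le_klD {Q p : α → ℝ} (hQ : ∀ a, 0 ≤ Q a) (hp : ∀ a, 0 < p a) :
    ∑ a, Q a - ∑ a, p a ≤ klD Q p := by
  rw [← sum_sub_distrib]
  refine sum_le_sum fun a _ => ?_
  rcases (hQ a).eq_or_lt with h | h
  · simp [← h, (hp a).le]
  calc Q a - p a = Q a * (1 - (Q a / p a)⁻¹) := by field_simp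
    _ ≤ Q a * log (Q a / p a) :=
        mul_le_mul_of_nonneg_left (one_sub_inv_le_log_of_pos (div_pos h (hp a))) h.le

lemma klD_nonneg {Q p : α → ℝ} (hQ : IsPMF Q) (hp : ∀ a, 0 < p a) (hp1 : ∑ a, p a = 1) :
    0 ≤ klD Q p := by
  simpa [hQ.2, hp1] using sum_sub_sum_le_klD hQ.1 hp

lemma continuous_klD_left (p : α → ℝ) : Continuous fun Q : α → ℝ => klD Q p := by
  refine continuous_finsetSum _ fun a _ => ?_
  by_cases hpa : p a = 0
  · simpa [hpa] using continuous_const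
  have : (fun Q : α → ℝ => Q a * log (Q a / p a)) = fun Q => Q a * log (Q a) - Q a * log (p a) := by
    ext Q
    rcases eq_or_ne (Q a) 0 with h | h
    · simp [h]
    · rw [log_div h hpa, mul_sub]
  rw [this]
  exact (continuous_mul_log.comp (continuous_apply a)).sub
    ((continuous_apply a).mul continuous_const)

end KL

/-- Lower semicontinuity at `0` of `δ ↦ inf {f x | x ∈ C, g x ≤ δ}`: on the compact set
`C ∩ {f ≤ c - ε}` the continuous `g` is positive, hence bounded away from `0`. -/
theorem IsCompact.eventually_forall_sub_lt {X : Type*} [TopologicalSpace X] {C : Set X}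
    (hC : IsCompact C) {f g : X → ℝ} (hf : Continuous f) (hg : Continuous g) {c ε : ℝ}
    (hε : 0 < ε) (hc : ∀ x ∈ C, g x ≤ 0 → c ≤ f x) :
    ∀ᶠ δ in 𝓝 (0 : ℝ), ∀ x ∈ C, g x ≤ δ → c - ε < f x := by
  have hK : IsCompact (C ∩ {x | f x ≤ c - ε}) := hC.inter_right (isClosed_le hf continuous_const)
  obtain ⟨δ₀, hδ₀, hgK⟩ := hK.exists_forall_le' (a := 0) hg.continuousOn fun x hx => by
    by_contra! hgx
    have hfx : f x ≤ c - ε := hx.2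
    linarith [hc x hx.1 hgx]
  filter_upwards [Iio_mem_nhds hδ₀] with δ hδ x hxC hgx
  by_contra! hfx
  linarith [hgK x ⟨hxC, hfx⟩, show δ < δ₀ from hδ]

lemma continuous_mX {𝒳 𝒴₁ : Type*} [Fintype 𝒴₁] : Continuous (mX : (𝒳 × 𝒴₁ → ℝ) → 𝒳 → ℝ) :=
  continuous_pi fun _ => continuous_finsetSum _ fun _ _ => continuous_apply _

lemma continuous_mY1 {𝒳 𝒴₁ : Type*} [Fintype 𝒳] : Continuous (mY1 : (𝒳 × 𝒴₁ → ℝ) → 𝒴₁ → ℝ) :=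
  continuous_pi fun _ => continuous_finsetSum _ fun _ _ => continuous_apply _

section Marginals

variable {𝒳 𝒴₁ : Type*} [Fintype 𝒳] [Fintype 𝒴₁]

def klInfNear (p pm : 𝒳 × 𝒴₁ → ℝ) (μ μ' : ℝ) : ℝ :=
  sInf {d : ℝ | ∃ Q : 𝒳 × 𝒴₁ → ℝ, IsPMF Q
    ∧ (∀ a, |mX Q a - mX pm a| ≤ μ) ∧ (∀ b, |mY1 Q b - mY1 pm b| ≤ μ') ∧ d = klD Q p}

def klInf (p pm : 𝒳 × 𝒴₁ → ℝ) : ℝ :=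
  sInf {e : ℝ | ∃ Q : 𝒳 × 𝒴₁ → ℝ, IsPMF Q
    ∧ (∀ a, mX Q a = mX pm a) ∧ (∀ b, mY1 Q b = mY1 pm b) ∧ e = klD Q p}

lemma IsPMF.mX {p : 𝒳 × 𝒴₁ → ℝ} (hp : IsPMF p) : IsPMF (mX p) :=
  ⟨fun _ => sum_nonneg fun _ _ => hp.1 _, by rw [← hp.2, Fintype.sum_prod_type]; rfl⟩

lemma IsPMF.mY1 {p : 𝒳 × 𝒴₁ → ℝ} (hp : IsPMF p) : IsPMF (mY1 p) :=
  ⟨fun _ => sum_nonneg fun _ _ => hp.1 _, by rw [← hp.2, Fintype.sum_prod_type]; exact sum_comm⟩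

lemma mX_emp {n : ℕ} (z : Fin n → 𝒳 × 𝒴₁) : mX (emp z) = emp fun t => (z t).1 := by
  ext x
  simp only [mX, emp, ← sum_div, ← Nat.cast_sum]
  rw [card_eq_sum_card_fiberwise (f := fun t => (z t).2) (t := univ) fun t _ => mem_univ _]
  congr! 4 with y
  ext t
  simp [Prod.ext_iff]

lemma mY1_emp {n : ℕ} (z : Fin n → 𝒳 × 𝒴₁) : mY1 (emp z) = emp fun t => (z t).2 := by
  ext y
  simp only [mY1, emp, ← sum_div, ← Nat.cast_sum]
  rw [card_eq_sum_card_fiberwise (f := fun t => (z t).1) (t := univ) fun t _ => mem_univ _]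
  congr! 4 with x
  ext t
  simp [Prod.ext_iff, and_comm]

lemma dist_marginals_le_iff {Q pm : 𝒳 × 𝒴₁ → ℝ} {δ : ℝ} (hδ : 0 ≤ δ) :
    dist (mX Q, mY1 Q) (mX pm, mY1 pm) ≤ δ ↔
      (∀ a, |mX Q a - mX pm a| ≤ δ) ∧ ∀ b, |mY1 Q b - mY1 pm b| ≤ δ := by
  simp only [Prod.dist_eq, max_le_iff, dist_pi_le_iff hδ, Real.dist_eq]

variable {p pm : 𝒳 × 𝒴₁ → ℝ}

lemma klInfNear_le (hp : ∀ a, 0 < p a) (hp1 : ∑ a, p a = 1) {Q : 𝒳 × 𝒴₁ → ℝ} {μ μ' : ℝ}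
    (hQ : IsPMF Q) (hX : ∀ a, |mX Q a - mX pm a| ≤ μ) (hY : ∀ b, |mY1 Q b - mY1 pm b| ≤ μ') :
    klInfNear p pm μ μ' ≤ klD Q p :=
  csInf_le ⟨0, by rintro _ ⟨Q', hQ', -, -, rfl⟩; exact klD_nonneg hQ' hp hp1⟩ ⟨Q, hQ, hX, hY, rfl⟩

lemma klInf_le (hp : ∀ a, 0 < p a) (hp1 : ∑ a, p a = 1) {Q : 𝒳 × 𝒴₁ → ℝ} (hQ : IsPMF Q)
    (hX : ∀ a, mX Q a = mX pm a) (hY : ∀ b, mY1 Q b = mY1 pm b) : klInf p pm ≤ klD Q p :=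
  csInf_le ⟨0, by rintro _ ⟨Q', hQ', -, -, rfl⟩; exact klD_nonneg hQ' hp hp1⟩ ⟨Q, hQ, hX, hY, rfl⟩

lemma klInf_nonneg (hp : ∀ a, 0 < p a) (hp1 : ∑ a, p a = 1) (hpm : IsPMF pm) :
    0 ≤ klInf p pm :=
  le_csInf ⟨_, pm, hpm, fun _ => rfl, fun _ => rfl, rfl⟩ fun _ ⟨_, hQ, _, _, he⟩ =>
    he ▸ klD_nonneg hQ hp hp1

theorem eventually_klInf_sub_le_klInfNear (hp : ∀ a, 0 < p a) (hp1 : ∑ a, p a = 1)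
    (hpm : IsPMF pm) {ε : ℝ} (hε : 0 < ε) :
    ∀ᶠ δ in 𝓝 (0 : ℝ), ∀ μ μ' : ℝ, 0 ≤ μ → μ ≤ μ' → μ' ≤ δ →
      klInf p pm - ε ≤ klInfNear p pm μ μ' := by
  have hg : Continuous fun Q => dist (mX Q, mY1 Q) (mX pm, mY1 pm) :=
    (continuous_mX.prodMk continuous_mY1).dist continuous_const
  have hc : ∀ Q ∈ stdSimplex ℝ (𝒳 × 𝒴₁), dist (mX Q, mY1 Q) (mX pm, mY1 pm) ≤ 0 →
      klInf p pm ≤ klD Q p := fun Q hQ hdist => by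
    obtain ⟨hX, hY⟩ := (dist_marginals_le_iff le_rfl).1 hdist
    exact klInf_le hp hp1 hQ (fun a => by simpa [sub_eq_zero] using hX a)
      fun b => by simpa [sub_eq_zero] using hY b
  filter_upwards [(isCompact_stdSimplex ℝ _).eventually_forall_sub_lt (continuous_klD_left p) hg
    hε hc] with δ hδ μ μ' hμ hμμ' hμ'δ
  have hμ' : 0 ≤ μ' := hμ.trans hμμ'
  refine le_csInf ⟨_, pm, hpm, fun a => by simpa using hμ, fun b => by simpa using hμ', rfl⟩ ?_
  rintro _ ⟨Q, hQ, hX, hY, rfl⟩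
  refine (hδ Q hQ ((dist_marginals_le_iff (hμ'.trans hμ'δ)).2 ⟨?_, ?_⟩)).le
  · exact fun a => (hX a).trans (hμμ'.trans hμ'δ)
  · exact fun b => (hY b).trans hμ'δ

theorem exists_pos_forall_klInf_sub_le_klInfNear {ι : Type*} [Finite ι] {P : ι → 𝒳 × 𝒴₁ → ℝ}
    (hp : ∀ a, 0 < p a) (hp1 : ∑ a, p a = 1) (hP : ∀ i, IsPMF (P i)) {ε : ℝ} (hε : 0 < ε) :
    ∃ μ₀ > 0, ∀ i μ μ', 0 ≤ μ → μ ≤ μ' → μ' < μ₀ → klInf p (P i) - ε ≤ klInfNear p (P i) μ μ' := by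
  obtain ⟨μ₀, hμ₀, h⟩ := Metric.eventually_nhds_iff.1 <| eventually_all.2 fun i =>
    eventually_klInf_sub_le_klInfNear hp hp1 (hP i) hε
  refine ⟨μ₀, hμ₀, fun i μ μ' hμ hμμ' hμ'μ₀ => h ?_ i μ μ' hμ hμμ' le_rfl⟩
  simpa [abs_of_nonneg (hμ.trans hμμ')] using hμ'μ₀

end Marginals

lemma ite_exists_mem_le_sum_ite {ι M : Type*} [AddCommMonoid M] [PartialOrder M]
    [IsOrderedAddMonoid M] (s : Finset ι) (A : ι → Prop) [DecidablePred A]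
    [Decidable (∃ i ∈ s, A i)] {w : M} (hw : 0 ≤ w) :
    (if ∃ i ∈ s, A i then w else 0) ≤ ∑ i ∈ s, if A i then w else 0 := by
  split_ifs with h
  · obtain ⟨i, hi, hA⟩ := h
    calc w = if A i then w else 0 := (if_pos hA).symm
      _ ≤ ∑ i ∈ s, if A i then w else 0 :=
        single_le_sum (f := fun i => if A i then w else 0)
          (fun j _ => by split_ifs <;> simp [hw]) hi
  · exact sum_nonneg fun j _ => by split_ifs <;> simp [hw]

lemma pow_mul_exp_eq_exp_sub {n : ℕ} (hn : 0 < n) (K : ℕ) (S : ℝ) :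
    (n + 1 : ℝ) ^ K * exp (-n * S) = exp (-n * (S - K * log (n + 1) / n)) := by
  have : -(n : ℝ) * (S - K * log (n + 1) / n) = -n * S + K * log (n + 1) := by
    field_simp
    ring
  rw [this, exp_add, exp_nat_mul, exp_log (by positivity), mul_comm]

section Detector

variable {𝒳 𝒴₁ : Type*} [Fintype 𝒳] [Fintype 𝒴₁] {Mh : ℕ} {P : Fin Mh → 𝒳 × 𝒴₁ → ℝ}
  {h1 : Fin Mh} {n : ℕ} {μ μ' : ℝ}

lemma β1_eq_sum_pairs :
    β1 P h1 n μ μ' = ∑ z : Fin n → 𝒳 × 𝒴₁,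
      if ∃ m, m ≠ h1 ∧ Typ μ (mX (P m)) (fun t => (z t).1) ∧ Typ μ' (mY1 (P m)) (fun t => (z t).2)
        then ∏ t, P h1 (z t) else 0 := by
  rw [β1, ← Fintype.sum_prod_type',
    ← (Equiv.arrowProdEquivProdArrow (Fin n) (fun _ => 𝒳) (fun _ => 𝒴₁)).symm.sum_comp]
  rfl

theorem β1_le_sum_mul_exp (hpos : ∀ a, 0 < P h1 a) (hP1 : ∑ a, P h1 a = 1) (hn : 0 < n) :
    β1 P h1 n μ μ' ≤ ∑ m ∈ univ.filter (· ≠ h1),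
      (n + 1) ^ Fintype.card (𝒳 × 𝒴₁) * exp (-n * klInfNear (P h1) (P m) μ μ') := by
  set typ : Fin Mh → (Fin n → 𝒳 × 𝒴₁) → Prop := fun m z =>
    Typ μ (mX (P m)) (fun t => (z t).1) ∧ Typ μ' (mY1 (P m)) (fun t => (z t).2)
  calc β1 P h1 n μ μ'
      = ∑ z, if ∃ m ∈ univ.filter (· ≠ h1), typ m z then ∏ t, P h1 (z t) else 0 := by
        simp only [β1_eq_sum_pairs, mem_filter, mem_univ, true_and, typ]
    _ ≤ ∑ z, ∑ m ∈ univ.filter (· ≠ h1), if typ m z then ∏ t, P h1 (z t) else 0 :=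
        sum_le_sum fun z _ => ite_exists_mem_le_sum_ite _ _ (prod_nonneg fun t _ => (hpos _).le)
    _ = ∑ m ∈ univ.filter (· ≠ h1), ∑ z with typ m z, ∏ t, P h1 (z t) := by
        rw [sum_comm]
        simp only [sum_filter]
    _ ≤ _ := by
        refine sum_le_sum fun m _ => sum_prod_le_of_le_klD_emp hn hpos fun z hz => ?_
        obtain ⟨hX, hY⟩ := (mem_filter.1 hz).2
        refine klInfNear_le hpos hP1 (isPMF_emp hn z) (fun a => ?_) fun b => ?_
        · rw [mX_emp]; exact hX a
        · rw [mY1_emp]; exact hY b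

theorem β1_le_sum_exp (hpos : ∀ a, 0 < P h1 a) (hP1 : ∑ a, P h1 a = 1) (hn : 0 < n) :
    β1 P h1 n μ μ' ≤ ∑ m ∈ univ.filter (· ≠ h1),
      exp (-n * (klInfNear (P h1) (P m) μ μ' - Fintype.card (𝒳 × 𝒴₁) * log (n + 1) / n)) :=
  (β1_le_sum_mul_exp hpos hP1 hn).trans_eq (sum_congr rfl fun _ _ => pow_mul_exp_eq_exp_sub hn _ _)

lemma prod_le_β1 (hP1 : ∀ a, 0 ≤ P h1 a) {x : Fin n → 𝒳} {y : Fin n → 𝒴₁}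
    (h : ∃ m, m ≠ h1 ∧ Typ μ (mX (P m)) x ∧ Typ μ' (mY1 (P m)) y) :
    ∏ t, P h1 (x t, y t) ≤ β1 P h1 n μ μ' := by
  have hterm : ∀ (x' : Fin n → 𝒳) (y' : Fin n → 𝒴₁),
      0 ≤ if ∃ m, m ≠ h1 ∧ Typ μ (mX (P m)) x' ∧ Typ μ' (mY1 (P m)) y'
        then ∏ t, P h1 (x' t, y' t) else 0 := fun x' y' => by
    split_ifs
    exacts [prod_nonneg fun t _ => hP1 _, le_rfl]
  calc ∏ t, P h1 (x t, y t) = if ∃ m, m ≠ h1 ∧ Typ μ (mX (P m)) x ∧ Typ μ' (mY1 (P m)) y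
      then ∏ t, P h1 (x t, y t) else 0 := (if_pos h).symm
    _ ≤ _ := single_le_sum (fun y' _ => hterm x y') (mem_univ y)
    _ ≤ β1 P h1 n μ μ' :=
        single_le_sum (f := fun x' => ∑ y', _) (fun x' _ => sum_nonneg fun y' _ => hterm x' y')
          (mem_univ x)

lemma exists_pos_eventually_pow_le_β1 {m : Fin Mh} (hm : m ≠ h1) (hPm : IsPMF (P m))
    (hpos : ∀ a, 0 < P h1 a) (hμ : 0 < μ) (hμ' : 0 < μ') :
    ∃ c > 0, ∀ᶠ n in atTop, c ^ n ≤ β1 P h1 n μ μ' := by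
  have : Nonempty (𝒳 × 𝒴₁) := by
    by_contra! h
    simpa using hPm.2
  obtain ⟨a₀, ha₀⟩ := Finite.exists_min (P h1)
  refine ⟨P h1 a₀, hpos a₀, ?_⟩
  filter_upwards [eventually_exists_typ hPm.mX hμ, eventually_exists_typ hPm.mY1 hμ']
    with n ⟨x, hx⟩ ⟨y, hy⟩
  calc P h1 a₀ ^ n = ∏ _t : Fin n, P h1 a₀ := by simp
    _ ≤ ∏ t, P h1 (x t, y t) := prod_le_prod (fun _ _ => (hpos a₀).le) fun t _ => ha₀ _
    _ ≤ β1 P h1 n μ μ' := prod_le_β1 (fun a => (hpos a).le) ⟨m, hm, hx, hy⟩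

end Detector

lemma tendsto_mul_log_add_one_div (K : ℝ) :
    Tendsto (fun n : ℕ => K * log (n + 1) / n) atTop (𝓝 0) := by
  have h := (tendsto_pow_log_div_mul_add_atTop 1 (-1) 1 one_ne_zero).comp
    (tendsto_atTop_add_const_right _ 1 tendsto_natCast_atTop_atTop)
  simpa [mul_div_assoc] using h.const_mul K

/-- The lower bound `cⁿ ≤ b n` keeps `log (b n)` away from its junk value at `0` and makes the
`liminf` cobounded. -/
theorem le_liminf_neg_inv_mul_log {b o : ℕ → ℝ} {c A s : ℝ} (hc : 0 < c)
    (ho : Tendsto o atTop (𝓝 0)) (hlow : ∀ᶠ n in atTop, c ^ n ≤ b n)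
    (hup : ∀ᶠ n in atTop, b n ≤ A * exp (-n * (s - o n))) :
    s ≤ liminf (fun n : ℕ => -(1 / (n : ℝ)) * log (b n)) atTop := by
  have hlim : Tendsto (fun n : ℕ => s - o n - log A / n) atTop (𝓝 s) := by
    simpa using (tendsto_const_nhds.sub ho).sub (tendsto_const_div_atTop_nhds_zero_nat (log A))
  have hge : ∀ᶠ n : ℕ in atTop, s - o n - log A / n ≤ -(1 / (n : ℝ)) * log (b n) := by
    filter_upwards [hlow, hup, eventually_gt_atTop 0] with n hlo hhi hn
    have hb : 0 < b n := (pow_pos hc n).trans_le hlo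
    have hA : A ≠ 0 := by rintro rfl; linarith
    have hlog : log (b n) ≤ log A - n * (s - o n) := by
      simpa [log_mul hA (exp_pos _).ne', sub_eq_add_neg] using log_le_log hb hhi
    have hn' : (0 : ℝ) < n := by exact_mod_cast hn
    rw [show s - o n - log A / n = (n * (s - o n) - log A) / n by field_simp,
      show -(1 / (n : ℝ)) * log (b n) = -log (b n) / n by ring]
    exact div_le_div_of_nonneg_right (by linarith) hn'.le
  have hle : ∀ᶠ n : ℕ in atTop, -(1 / (n : ℝ)) * log (b n) ≤ -log c := by
    filter_upwards [hlow, eventually_gt_atTop 0] with n hlo hn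
    have hn' : (0 : ℝ) < n := by exact_mod_cast hn
    have := log_le_log (pow_pos hc n) hlo
    rw [log_pow] at this
    rw [show -(1 / (n : ℝ)) * log (b n) = -log (b n) / n by ring, div_le_iff₀ hn']
    linarith
  calc s = liminf (fun n : ℕ => s - o n - log A / n) atTop := hlim.liminf_eq.symm
    _ ≤ _ := liminf_le_liminf hge hlim.isBoundedUnder_ge
        (isCoboundedUnder_ge_of_eventually_le _ hle)

/-- Zero-rate concurrent detection achievability. With the
typicality scheme, `β₁ ≤ ∑_{m≠1} exp[-n(min{D(Q‖P^{(1)}_{XY₁}) :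
|Q_X - P_X^{(m)}| ≤ μ, |Q_{Y₁} - P_{Y₁}^{(m)}| ≤ μ'} - o(1))]`, and in the limit
`μ, μ' → 0` the exponent is
`min_{m≠1} min{D(Q‖P^{(1)}_{XY₁}) : Q_X = P_X^{(m)}, Q_{Y₁} = P_{Y₁}^{(m)}}`. -/
theorem stmt_19 {𝒳 𝒴₁ : Type*} [Fintype 𝒳] [Fintype 𝒴₁]
    (Mh : ℕ) (hMh : 2 ≤ Mh) (h1 : Fin Mh)
    (P : Fin Mh → 𝒳 × 𝒴₁ → ℝ) (hP : ∀ m, IsPMF (P m)) (hpos : ∀ a, 0 < P h1 a) :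
    (∀ μ μ' : ℝ, 0 < μ → μ < μ' →
      ∃ o : ℕ → ℝ, Filter.Tendsto o Filter.atTop (nhds 0) ∧
        ∀ n : ℕ, 0 < n →
          β1 P h1 n μ μ' ≤ ∑ m ∈ Finset.univ.filter (fun m : Fin Mh => m ≠ h1),
            Real.exp (-(n : ℝ) *
              (sInf {d : ℝ | ∃ Q : 𝒳 × 𝒴₁ → ℝ, IsPMF Q
                  ∧ (∀ a, |mX Q a - mX (P m) a| ≤ μ)
                  ∧ (∀ b, |mY1 Q b - mY1 (P m) b| ≤ μ')
                  ∧ d = klD Q (P h1)} - o n)))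
      ∧ ∀ η > (0:ℝ), ∃ μ₀ > (0:ℝ), ∀ μ μ' : ℝ, 0 < μ → μ < μ' → μ' < μ₀ →
          sInf {d : ℝ | ∃ m : Fin Mh, m ≠ h1 ∧
              d = sInf {e : ℝ | ∃ Q : 𝒳 × 𝒴₁ → ℝ, IsPMF Q
                  ∧ (∀ a, mX Q a = mX (P m) a)
                  ∧ (∀ b, mY1 Q b = mY1 (P m) b)
                  ∧ e = klD Q (P h1)}} - η
            ≤ Filter.liminf (fun n : ℕ => -(1 / (n : ℝ)) * Real.log (β1 P h1 n μ μ'))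
                Filter.atTop := by
  set F := univ.filter (· ≠ h1)
  set K := Fintype.card (𝒳 × 𝒴₁)
  refine ⟨fun μ μ' _ _ => ⟨_, tendsto_mul_log_add_one_div K,
    fun n hn => β1_le_sum_exp hpos (hP h1).2 hn⟩, fun η hη => ?_⟩
  set θ := sInf {d : ℝ | ∃ m : Fin Mh, m ≠ h1 ∧ d = klInf (P h1) (P m)}
  have hθ : ∀ m ∈ F, θ ≤ klInf (P h1) (P m) := fun m hm =>
    csInf_le ⟨0, by rintro _ ⟨m', -, rfl⟩; exact klInf_nonneg hpos (hP h1).2 (hP m')⟩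
      ⟨m, (mem_filter.1 hm).2, rfl⟩
  obtain ⟨μ₀, hμ₀, hnear⟩ :=
    exists_pos_forall_klInf_sub_le_klInfNear hpos (hP h1).2 hP (half_pos hη)
  refine ⟨μ₀, hμ₀, fun μ μ' hμ hμμ' hμ'μ₀ => ?_⟩
  obtain ⟨m₀, hm₀⟩ := Fintype.exists_ne_of_one_lt_card (by rw [Fintype.card_fin]; omega) h1
  obtain ⟨c, hc, hlow⟩ := exists_pos_eventually_pow_le_β1 hm₀ (hP m₀) hpos hμ (hμ.trans hμμ')
  have hup : ∀ᶠ n : ℕ in atTop,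
      β1 P h1 n μ μ' ≤ #F * exp (-n * (θ - η / 2 - K * log (n + 1) / n)) := by
    filter_upwards [eventually_gt_atTop 0] with n hn
    refine (β1_le_sum_exp hpos (hP h1).2 hn).trans <|
      (sum_le_card_nsmul _ _ _ fun m hm => exp_le_exp.2 ?_).trans_eq (nsmul_eq_mul _ _)
    have := hnear m μ μ' hμ.le hμμ'.le hμ'μ₀
    exact mul_le_mul_of_nonpos_left (by linarith [hθ m hm]) (neg_nonpos.2 n.cast_nonneg)
  change θ - η ≤ _
  linarith [le_liminf_neg_inv_mul_log hc (tendsto_mul_log_add_one_div K) hlow hup]
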